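/- Let S ⊆ ℝ^d be a nonempty compact convex set, f : S → ℝ continuous, and let x₀ be an interior point of S. Then the dual supremum is attained: there exist t ∈ ℝ and v ∈ ℝ^d such that t + v·x ≤ f(x) for all x ∈ S and t + v·x₀ = f⋆(x₀). -/

import Mathlib

noncomputable section

/-- The convex-roof value `f⋆(x₀)`: the infimum of `∑ p(λ) f(xλ)` over finite
convex decompositions `∑ p(λ) xλ = x₀` with all `xλ ∈ S`. -/
def fstar {d : ℕ} (S : Set (Fin d → ℝ)) (f : (Fin d → ℝ) → ℝ)
    (x₀ : Fin d → ℝ) : ℝ :=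
  sInf {y | ∃ (m : ℕ) (xs : Fin m → Fin d → ℝ) (pr : Fin m → ℝ),
    (∀ i, 0 ≤ pr i) ∧ (∑ i, pr i) = 1 ∧ (∀ i, xs i ∈ S) ∧
    (∑ i, pr i • xs i) = x₀ ∧ y = ∑ i, pr i * f (xs i)}

open Topology

/-! Above `x₀`, the convex hull `K` of the epigraph of `f` never dips below `f⋆(x₀)`, so
`(x₀, f⋆(x₀))` is not an interior point of `K`, while `K` contains the open box
`interior S × (max f, ∞)`. A functional separating that point from `interior K` therefore
has a nonzero vertical component, i.e. its level set is the graph of an affine function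
`t + v·x`; it lies below `K`, in particular below the graph of `f`, and touches `f⋆` at `x₀`. -/

section Separation

variable {E : Type*} [TopologicalSpace E]

theorem notMem_interior_of_forall_le_snd {K : Set (E × ℝ)} {x₀ : E} {μ : ℝ}
    (hlow : ∀ p ∈ K, p.1 = x₀ → μ ≤ p.2) : (x₀, μ) ∉ interior K := by
  intro h
  have hnear : ∀ᶠ y in 𝓝[<] μ, (x₀, y) ∈ K :=
    nhdsWithin_le_nhds <| (Continuous.prodMk_right x₀).continuousAt.preimage_mem_nhds
      (mem_interior_iff_mem_nhds.1 h)
  obtain ⟨y, hyK, hyμ⟩ := (hnear.and self_mem_nhdsWithin).exists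
  exact (hlow _ hyK rfl).not_gt hyμ

theorem Convex.exists_nonvertical_supporting_hyperplane [AddCommGroup E] [Module ℝ E]
    [IsTopologicalAddGroup E] [ContinuousSMul ℝ E] [LocallyConvexSpace ℝ E]
    {K : Set (E × ℝ)} (hK : Convex ℝ K) {x₀ : E} {μ y : ℝ}
    (hlow : ∀ p ∈ K, p.1 = x₀ → μ ≤ p.2) (hy : (x₀, y) ∈ interior K) :
    ∃ ℓ : E →L[ℝ] ℝ, ∀ p ∈ K, μ + ℓ (p.1 - x₀) ≤ p.2 := by
  have hμ := notMem_interior_of_forall_le_snd hlow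
  have hμy : μ < y :=
    (hlow _ (interior_subset hy) rfl).lt_of_ne fun h => hμ (h ▸ hy)
  obtain ⟨φ, hφ⟩ := geometric_hahn_banach_open_point hK.interior isOpen_interior hμ
  have hφK : ∀ p ∈ K, φ p ≤ φ (x₀, μ) := by
    have hcl : K ⊆ closure (interior K) := by
      rw [hK.closure_interior_eq_closure_of_nonempty_interior ⟨_, hy⟩]
      exact subset_closure
    exact fun p hp => closure_lt_subset_le φ.continuous continuous_const
      (closure_mono (fun q hq => hφ q hq) (hcl hp))
  set ψ : E →L[ℝ] ℝ := φ.comp (.inl ℝ E ℝ)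
  set a : ℝ := φ (0, 1)
  have hφ_eq : ∀ p : E × ℝ, φ p = ψ p.1 + a * p.2 := fun p => by
    rw [← φ.comp_inl_add_comp_inr p, mul_comm, ← smul_eq_mul, ← map_smul]
    simp [ψ]
  -- `(x₀, y)` lies above `(x₀, μ)` and strictly on the interior side, so `φ` is not vertical.
  have ha : a < 0 := by
    have := hφ _ hy
    rw [hφ_eq, hφ_eq] at this
    nlinarith
  refine ⟨(-a⁻¹) • ψ, fun p hp => ?_⟩
  have hp := hφK p hp
  rw [hφ_eq, hφ_eq] at hp
  have key : -a⁻¹ * (ψ p.1 - ψ x₀) ≤ p.2 - μ := by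
    rw [neg_mul, neg_le, ← div_eq_inv_mul, le_div_iff_of_neg ha]
    linarith
  simp only [smul_apply, map_sub, smul_eq_mul]
  linarith

end Separation

theorem fstar_le_sum {d : ℕ} {S : Set (Fin d → ℝ)} {f : (Fin d → ℝ) → ℝ} {B : ℝ}
    (hB : ∀ x ∈ S, B ≤ f x) {ι : Type*} [Fintype ι] (w : ι → ℝ) (x : ι → Fin d → ℝ)
    (hw₀ : ∀ i, 0 ≤ w i) (hw₁ : ∑ i, w i = 1) (hx : ∀ i, x i ∈ S) :
    fstar S f (∑ i, w i • x i) ≤ ∑ i, w i * f (x i) := by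
  refine csInf_le ⟨B, ?_⟩ ?_
  · rintro y ⟨m, xs, pr, hpr₀, hpr₁, hxs, -, rfl⟩
    calc B = ∑ i, pr i * B := by rw [← Finset.sum_mul, hpr₁, one_mul]
      _ ≤ ∑ i, pr i * f (xs i) :=
        Finset.sum_le_sum fun i _ => mul_le_mul_of_nonneg_left (hB _ (hxs i)) (hpr₀ i)
  · let e := (Fintype.equivFin ι).symm
    exact ⟨_, x ∘ e, w ∘ e, fun i => hw₀ _, (e.sum_comp w).trans hw₁, fun i => hx _,
      e.sum_comp fun i => w i • x i, (e.sum_comp fun i => w i * f (x i)).symm⟩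

theorem fstar_le_of_mem_convexHull_epigraph {d : ℕ} {S : Set (Fin d → ℝ)}
    {f : (Fin d → ℝ) → ℝ} {B : ℝ} (hB : ∀ x ∈ S, B ≤ f x) {q : (Fin d → ℝ) × ℝ}
    (hq : q ∈ convexHull ℝ {p | p.1 ∈ S ∧ f p.1 ≤ p.2}) : fstar S f q.1 ≤ q.2 := by
  obtain ⟨ι, _, w, z, hw₀, hw₁, hz, rfl⟩ := mem_convexHull_iff_exists_fintype.1 hq
  calc fstar S f (∑ i, w i • z i).1 = fstar S f (∑ i, w i • (z i).1) := by
        simp only [Prod.fst_sum, Prod.smul_fst]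
    _ ≤ ∑ i, w i * f (z i).1 := fstar_le_sum hB w _ hw₀ hw₁ fun i => (hz i).1
    _ ≤ ∑ i, w i * (z i).2 :=
        Finset.sum_le_sum fun i _ => mul_le_mul_of_nonneg_left (hz i).2 (hw₀ i)
    _ = (∑ i, w i • z i).2 := by simp only [Prod.snd_sum, Prod.smul_snd, smul_eq_mul]

theorem ContinuousLinearMap.apply_eq_sum_single {ι : Type*} [Fintype ι] [DecidableEq ι]
    (ℓ : (ι → ℝ) →L[ℝ] ℝ) (x : ι → ℝ) : ℓ x = ∑ i, ℓ (Pi.single i 1) * x i := by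
  conv_lhs => rw [← Finset.univ_sum_single x]
  simp only [map_sum]
  refine Finset.sum_congr rfl fun i _ => ?_
  rw [mul_comm, ← smul_eq_mul, ← map_smul, ← Pi.single_smul', smul_eq_mul, mul_one]

theorem fstar_dual_attained_of_interior {d : ℕ} (S : Set (Fin d → ℝ))
    (f : (Fin d → ℝ) → ℝ) (hScomp : IsCompact S)
    (hf : ContinuousOn f S)
    (x₀ : Fin d → ℝ) (hx₀ : x₀ ∈ interior S) :
    ∃ (t : ℝ) (v : Fin d → ℝ),
      (∀ x ∈ S, t + (∑ i, v i * x i) ≤ f x) ∧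
      t + (∑ i, v i * x₀ i) = fstar S f x₀ := by
  obtain ⟨B, hB⟩ := (hScomp.image_of_continuousOn hf).bddBelow
  obtain ⟨M, hM⟩ := (hScomp.image_of_continuousOn hf).bddAbove
  set epi : Set ((Fin d → ℝ) × ℝ) := {p | p.1 ∈ S ∧ f p.1 ≤ p.2}
  have hlow : ∀ p ∈ convexHull ℝ epi, p.1 = x₀ → fstar S f x₀ ≤ p.2 := by
    rintro p hp rfl
    exact fstar_le_of_mem_convexHull_epigraph (fun x hx => hB ⟨x, hx, rfl⟩) hp
  have hbox : interior S ×ˢ Set.Ioi M ⊆ convexHull ℝ epi := fun p ⟨hp₁, hp₂⟩ =>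
    subset_convexHull ℝ epi ⟨interior_subset hp₁,
      (hM ⟨p.1, interior_subset hp₁, rfl⟩).trans hp₂.le⟩
  have hup : (x₀, M + 1) ∈ interior (convexHull ℝ epi) :=
    interior_maximal hbox (isOpen_interior.prod isOpen_Ioi) ⟨hx₀, lt_add_one M⟩
  obtain ⟨ℓ, hℓ⟩ := (convex_convexHull ℝ epi).exists_nonvertical_supporting_hyperplane hlow hup
  refine ⟨fstar S f x₀ - ℓ x₀, fun i => ℓ (Pi.single i 1), fun x hx => ?_, ?_⟩
  · have := hℓ (x, f x) (subset_convexHull ℝ epi ⟨hx, le_rfl⟩)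
    rw [map_sub] at this
    rw [← ℓ.apply_eq_sum_single]
    linarith
  · rw [← ℓ.apply_eq_sum_single, sub_add_cancel]

end
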